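/- arXiv:2005.03612 — 7 statements merged into one kernel-verified Lean document; each statement's English description precedes it below -/
import Mathlib

section
/- Let Y, Z1, Z2, Z3 ∈ ℝ² and suppose ⟨Y Z1⟩ ≠ 0, ⟨Y Z2⟩ ≠ 0 and ⟨Y Z3⟩ ≠ 0. Then ⟨Z2 Z3⟩² / (⟨Y Z3⟩ · ⟨Y Z2⟩²) − ⟨Z3 Z1⟩² / (⟨Y Z3⟩ · ⟨Y Z1⟩²) = ⟨Z2 Z1⟩ · (⟨Z2 Z3⟩ · ⟨Y Z1⟩ − ⟨Z3 Z1⟩ · ⟨Y Z2⟩) / (⟨Y Z1⟩² · ⟨Y Z2⟩²). -/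
/-- The 2×2 determinant of the matrix with rows `a` and `b`. -/
def det2 (a b : Fin 2 → ℝ) : ℝ := a 0 * b 1 - a 1 * b 0

/-! The two terms share the spurious factor `⟨Y Z3⟩` in their denominators. Over the common
denominator the numerator is a difference of squares, and by the Plücker relation one of its
factors is `⟨Y Z3⟩ ⟨Z2 Z1⟩`, so the spurious pole cancels. -/

theorem det2_mul_det2_add_det2_mul_det2 (Y Z1 Z2 Z3 : Fin 2 → ℝ) :
    det2 Z2 Z3 * det2 Y Z1 + det2 Z3 Z1 * det2 Y Z2 = det2 Y Z3 * det2 Z2 Z1 := by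
  unfold det2
  ring

theorem sq_div_sub_sq_div_eq_of_add_eq {K : Type*} [Field K] {a b x y c d : K}
    (hx : x ≠ 0) (hy : y ≠ 0) (hc : c ≠ 0) (h : a * x + b * y = c * d) :
    a ^ 2 / (c * y ^ 2) - b ^ 2 / (c * x ^ 2) = d * (a * x - b * y) / (x ^ 2 * y ^ 2) := by
  have hsq : a ^ 2 * x ^ 2 - b ^ 2 * y ^ 2 = c * d * (a * x - b * y) := by
    rw [← h]; ring
  field_simp
  linear_combination hsq

theorem stmt_1 (Y Z1 Z2 Z3 : Fin 2 → ℝ)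
    (h1 : det2 Y Z1 ≠ 0) (h2 : det2 Y Z2 ≠ 0) (h3 : det2 Y Z3 ≠ 0) :
    det2 Z2 Z3 ^ 2 / (det2 Y Z3 * det2 Y Z2 ^ 2) -
      det2 Z3 Z1 ^ 2 / (det2 Y Z3 * det2 Y Z1 ^ 2) =
    det2 Z2 Z1 * (det2 Z2 Z3 * det2 Y Z1 - det2 Z3 Z1 * det2 Y Z2) /
      (det2 Y Z1 ^ 2 * det2 Y Z2 ^ 2) :=
  sq_div_sub_sq_div_eq_of_add_eq h1 h2 h3 (det2_mul_det2_add_det2_mul_det2 Y Z1 Z2 Z3)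
end

section
/- Fix α ∈ ℝ with α ≠ 0 and set Z1 := (1,0,0), Z4 := (0, α, 1−α) and Zs := (0, −(1−α), α) in ℝ³. Then for every Y = (y1, y2, y3) ∈ ℝ³ with α·y3 = (1−α)·y2, y1 ≠ 0 and y2 ≠ 0, one has ⟨Zs Z1 Z4⟩ / (⟨Y Zs Z1⟩² · ⟨Y Zs Z4⟩) = −α² / ((α² + (1−α)²)² · y1 · y2²). -/
/-- The 3×3 determinant of the matrix with rows `a`, `b`, `c`. -/
noncomputable def det3 (a b c : Fin 3 → ℝ) : ℝ := Matrix.det (Matrix.of ![a, b, c])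

theorem stmt_2 (α : ℝ) (hα : α ≠ 0) :
    let Z1 : Fin 3 → ℝ := ![1, 0, 0]
    let Z4 : Fin 3 → ℝ := ![0, α, 1 - α]
    let Zs : Fin 3 → ℝ := ![0, -(1 - α), α]
    ∀ y1 y2 y3 : ℝ, α * y3 = (1 - α) * y2 → y1 ≠ 0 → y2 ≠ 0 →
      let Y : Fin 3 → ℝ := ![y1, y2, y3]
      det3 Zs Z1 Z4 / (det3 Y Zs Z1 ^ 2 * det3 Y Zs Z4) =
        -α ^ 2 / ((α ^ 2 + (1 - α) ^ 2) ^ 2 * y1 * y2 ^ 2) := by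
  intro Z1 Z4 Zs y1 y2 y3 h hy1 hy2 Y
  have hN : α ^ 2 + (1 - α) ^ 2 ≠ 0 := by positivity
  have hy3 : y3 = (1 - α) * y2 / α := by field_simp; linarith
  subst hy3
  have hD1 : det3 Zs Z1 Z4 = α ^ 2 + (1 - α) ^ 2 := by
    simp [det3, Matrix.det_fin_three, Matrix.vecHead, Matrix.vecTail, Z1, Z4, Zs]; ring
  have hD2 : det3 Y Zs Z1 = y2 * (α ^ 2 + (1 - α) ^ 2) / α := by
    simp [det3, Matrix.det_fin_three, Matrix.vecHead, Matrix.vecTail, Z1, Zs, Y]; field_simp; ring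
  have hD3 : det3 Y Zs Z4 = -(y1 * (α ^ 2 + (1 - α) ^ 2)) := by
    simp [det3, Matrix.det_fin_three, Matrix.vecHead, Matrix.vecTail, Z4, Zs, Y]; ring
  rw [hD1, hD2, hD3]
  field_simp
end

section
/- Let Y, Z1, Z2, Z3 ∈ ℝ³, λ, μ ∈ ℝ, and Z6 := λ • Z1 + μ • Z2. Assume ⟨Y Z1 Z2⟩ ≠ 0, ⟨Y Z2 Z3⟩ ≠ 0, ⟨Y Z3 Z1⟩ ≠ 0, ⟨Y Z1 Z6⟩ ≠ 0, ⟨Y Z6 Z3⟩ ≠ 0 and ⟨Y Z6 Z2⟩ ≠ 0. Then ⟨Z1 Z2 Z3⟩² / (⟨Y Z1 Z2⟩ · ⟨Y Z2 Z3⟩ · ⟨Y Z3 Z1⟩) = ⟨Z1 Z6 Z3⟩² / (⟨Y Z1 Z6⟩ · ⟨Y Z6 Z3⟩ · ⟨Y Z3 Z1⟩) + ⟨Z2 Z3 Z6⟩² / (⟨Y Z2 Z3⟩ · ⟨Y Z3 Z6⟩ · ⟨Y Z6 Z2⟩). -/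
lemma det3_expand (a b c : Fin 3 → ℝ) : det3 a b c =
    a 0 * b 1 * c 2 - a 0 * b 2 * c 1 - a 1 * b 0 * c 2 + a 1 * b 2 * c 0 +
      a 2 * b 0 * c 1 - a 2 * b 1 * c 0 := by
  simp [det3, Matrix.det_fin_three]

lemma key_frac (p q r D lam mu : ℝ) (hp : p ≠ 0) (hq : q ≠ 0) (hr : r ≠ 0)
    (hl : lam ≠ 0) (hm : mu ≠ 0) (hs : -lam * r + mu * q ≠ 0) :
    D ^ 2 / (p * q * r) =
      (mu * D) ^ 2 / (mu * p * (-lam * r + mu * q) * r) +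
      (lam * D) ^ 2 / (q * (-(-lam * r + mu * q)) * (lam * p)) := by
  have h1 : mu * p * (-lam * r + mu * q) * r ≠ 0 :=
    mul_ne_zero (mul_ne_zero (mul_ne_zero hm hp) hs) hr
  have h2 : q * (-(-lam * r + mu * q)) * (lam * p) ≠ 0 :=
    mul_ne_zero (mul_ne_zero hq (neg_ne_zero.mpr hs)) (mul_ne_zero hl hp)
  have h0 : p * q * r ≠ 0 := mul_ne_zero (mul_ne_zero hp hq) hr
  rw [div_add_div _ _ h1 h2, div_eq_div_iff h0 (mul_ne_zero h1 h2)]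
  ring

theorem stmt_3 (Y Z1 Z2 Z3 : Fin 3 → ℝ) (lam mu : ℝ) :
    let Z6 : Fin 3 → ℝ := lam • Z1 + mu • Z2
    det3 Y Z1 Z2 ≠ 0 → det3 Y Z2 Z3 ≠ 0 → det3 Y Z3 Z1 ≠ 0 →
    det3 Y Z1 Z6 ≠ 0 → det3 Y Z6 Z3 ≠ 0 → det3 Y Z6 Z2 ≠ 0 →
    det3 Z1 Z2 Z3 ^ 2 / (det3 Y Z1 Z2 * det3 Y Z2 Z3 * det3 Y Z3 Z1) =
      det3 Z1 Z6 Z3 ^ 2 / (det3 Y Z1 Z6 * det3 Y Z6 Z3 * det3 Y Z3 Z1) +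
      det3 Z2 Z3 Z6 ^ 2 / (det3 Y Z2 Z3 * det3 Y Z3 Z6 * det3 Y Z6 Z2) := by
  intro Z6 h1 h2 h3 h4 h5 h6
  have e1 : det3 Y Z1 Z6 = mu * det3 Y Z1 Z2 := by
    simp only [det3_expand, Z6, Pi.add_apply, Pi.smul_apply, smul_eq_mul]; ring
  have e2 : det3 Y Z6 Z2 = lam * det3 Y Z1 Z2 := by
    simp only [det3_expand, Z6, Pi.add_apply, Pi.smul_apply, smul_eq_mul]; ring
  have e3 : det3 Y Z6 Z3 = -lam * det3 Y Z3 Z1 + mu * det3 Y Z2 Z3 := by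
    simp only [det3_expand, Z6, Pi.add_apply, Pi.smul_apply, smul_eq_mul]; ring
  have e4 : det3 Y Z3 Z6 = -(-lam * det3 Y Z3 Z1 + mu * det3 Y Z2 Z3) := by
    simp only [det3_expand, Z6, Pi.add_apply, Pi.smul_apply, smul_eq_mul]; ring
  have e5 : det3 Z1 Z6 Z3 = mu * det3 Z1 Z2 Z3 := by
    simp only [det3_expand, Z6, Pi.add_apply, Pi.smul_apply, smul_eq_mul]; ring
  have e6 : det3 Z2 Z3 Z6 = lam * det3 Z1 Z2 Z3 := by
    simp only [det3_expand, Z6, Pi.add_apply, Pi.smul_apply, smul_eq_mul]; ring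
  have hmu : mu ≠ 0 := by rintro rfl; simp [e1] at h4
  have hlam : lam ≠ 0 := by rintro rfl; simp [e2] at h6
  have hs : -lam * det3 Y Z3 Z1 + mu * det3 Y Z2 Z3 ≠ 0 := e3 ▸ h5
  rw [e1, e2, e3, e4, e5, e6]
  exact key_frac _ _ _ _ _ _ h1 h2 h3 hlam hmu hs
end

section
/- Let α, β ∈ ℝ, set γ := α + β − 1, and let y1, y2, y3 ∈ ℝ with y1 ≠ 0, y2 ≠ 0, y3 ≠ 0, γ·y1 + α·y2 ≠ 0 and β·y2 + γ·y3 ≠ 0. Then 1/(y1·y2·y3) − γ²/(y2·(γ·y1 + α·y2)·(β·y2 + γ·y3)) = (β·γ·y1 + α·β·y2 + α·γ·y3)/(y1·y3·(γ·y1 + α·y2)·(β·y2 + γ·y3)). -/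
/-! Over the common denominator the left-hand side has numerator
`(γ y₁ + α y₂)(β y₂ + γ y₃) - γ² y₁ y₃`, in which the `y₁ y₃` terms cancel, leaving
`y₂ (β γ y₁ + α β y₂ + α γ y₃)`; the spurious pole `y₂ = 0` of the triangulation thus drops out. -/

theorem mul_sub_sq_mul_eq_mul {R : Type*} [CommRing R] (α β γ y₁ y₂ y₃ : R) :
    (γ * y₁ + α * y₂) * (β * y₂ + γ * y₃) - γ ^ 2 * y₁ * y₃ =
      y₂ * (β * γ * y₁ + α * β * y₂ + α * γ * y₃) := by
  ring

theorem one_div_sub_sq_div_eq_div {K : Type*} [Field K] {α β γ y₁ y₂ y₃ : K}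
    (h₁ : y₁ ≠ 0) (h₂ : y₂ ≠ 0) (h₃ : y₃ ≠ 0)
    (h₄ : γ * y₁ + α * y₂ ≠ 0) (h₅ : β * y₂ + γ * y₃ ≠ 0) :
    1 / (y₁ * y₂ * y₃) - γ ^ 2 / (y₂ * (γ * y₁ + α * y₂) * (β * y₂ + γ * y₃)) =
      (β * γ * y₁ + α * β * y₂ + α * γ * y₃) /
        (y₁ * y₃ * (γ * y₁ + α * y₂) * (β * y₂ + γ * y₃)) := by
  rw [div_sub_div _ _ (by simp [*]) (by simp [*]), div_eq_div_iff (by simp [*]) (by simp [*])]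
  linear_combination (y₁ * y₃ * (γ * y₁ + α * y₂) * (β * y₂ + γ * y₃)) *
    mul_sub_sq_mul_eq_mul α β γ y₁ y₂ y₃

theorem stmt_4 (α β : ℝ) (y1 y2 y3 : ℝ)
    (h1 : y1 ≠ 0) (h2 : y2 ≠ 0) (h3 : y3 ≠ 0)
    (h4 : (α + β - 1) * y1 + α * y2 ≠ 0) (h5 : β * y2 + (α + β - 1) * y3 ≠ 0) :
    1 / (y1 * y2 * y3) -
      (α + β - 1) ^ 2 /
        (y2 * ((α + β - 1) * y1 + α * y2) * (β * y2 + (α + β - 1) * y3)) =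
    (β * (α + β - 1) * y1 + α * β * y2 + α * (α + β - 1) * y3) /
      (y1 * y3 * ((α + β - 1) * y1 + α * y2) * (β * y2 + (α + β - 1) * y3)) :=
  one_div_sub_sq_div_eq_div h1 h2 h3 h4 h5
end

section
/- Let K be a field, n ∈ ℕ, F : Fin (n+1) → K with F i ≠ 0 for every i, and c : Fin n → K. Set B := ∑_{i : Fin n} c i · F (Fin.castSucc i) and assume B ≠ 0. Then (∏_{i : Fin (n+1)} F i)⁻¹ = ∑_{i : Fin n} c i · (B · F (Fin.last n) · ∏_{j : Fin n, j ≠ i} F (Fin.castSucc j))⁻¹. -/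
/-
Since B = ∑ cᵢ Fᵢ, we have 1/∏ F = B/(B ∏ F) = ∑ cᵢ Fᵢ/(B ∏ F), and Fᵢ/∏ F is the reciprocal
of the product with the factor Fᵢ omitted.
-/

open Finset

namespace Finset

variable {ι K : Type*} [DecidableEq ι] [Field K]

lemma inv_prod_erase_eq_mul_inv_prod {s : Finset ι} {g : ι → K} {i : ι} (hi : i ∈ s)
    (hgi : g i ≠ 0) : (∏ j ∈ s.erase i, g j)⁻¹ = g i * (∏ j ∈ s, g j)⁻¹ := by
  rw [← mul_prod_erase s g hi, mul_inv, ← mul_assoc, mul_inv_cancel₀ hgi, one_mul]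

lemma inv_prod_eq_sum_mul_inv_mul_prod_erase [Fintype ι] {g : ι → K} (hg : ∀ i, g i ≠ 0)
    (c : ι → K) (hB : ∑ i, c i * g i ≠ 0) :
    (∏ i, g i)⁻¹ = ∑ i, c i * ((∑ j, c j * g j) * ∏ j ∈ univ.erase i, g j)⁻¹ := by
  set B := ∑ j, c j * g j
  calc (∏ i, g i)⁻¹ = B⁻¹ * (∑ i, c i * g i) * (∏ i, g i)⁻¹ := by
        rw [inv_mul_cancel₀ hB, one_mul]
    _ = ∑ i, c i * (B⁻¹ * (g i * (∏ j, g j)⁻¹)) := by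
        rw [mul_sum, sum_mul]
        exact sum_congr rfl fun i _ ↦ by ring
    _ = ∑ i, c i * (B * ∏ j ∈ univ.erase i, g j)⁻¹ := by
        simp only [mul_inv, inv_prod_erase_eq_mul_inv_prod (mem_univ _) (hg _)]

end Finset

theorem stmt_13 {K : Type*} [Field K] (n : ℕ) (F : Fin (n + 1) → K)
    (hF : ∀ i, F i ≠ 0) (c : Fin n → K)
    (hB : (∑ i : Fin n, c i * F (Fin.castSucc i)) ≠ 0) :
    (∏ i : Fin (n + 1), F i)⁻¹ =
      ∑ i : Fin n, c i *
        ((∑ j : Fin n, c j * F (Fin.castSucc j)) * F (Fin.last n) *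
          ∏ j ∈ Finset.univ.erase i, F (Fin.castSucc j))⁻¹ := by
  rw [Fin.prod_univ_castSucc, mul_inv,
    inv_prod_eq_sum_mul_inv_mul_prod_erase (fun i ↦ hF i.castSucc) c hB, sum_mul]
  refine sum_congr rfl fun i _ ↦ ?_
  rw [mul_right_comm _ (F (Fin.last n)), mul_inv _ (F (Fin.last n)), mul_assoc]
end

section
/- Let E be a real vector space, S a set of vectors in E, k ∈ ℕ, u, w : Fin k → E, and φ : Fin k → (E →ₗ[ℝ] ℝ) a family of linear functionals such that: (i) φ i s = 0 for every s ∈ S and every i; (ii) φ i (u j) = −1 if i = j and φ i (u j) = 0 if i ≠ j; (iii) φ i (w j) = 1 if i = j and φ i (w j) = 0 if i ≠ j; (iv) u i + w i ∈ cone(S) for every i. Then cone(S ∪ Set.range u ∪ Set.range w) ∩ {x ∈ E | ∀ i, φ i x = 0} = cone(S). -/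
/-- `inCone S x` : `x` is a finite nonnegative linear combination of elements of `S`
(the convex cone generated by `S`, together with `0`). -/
def inCone {E : Type*} [AddCommGroup E] [Module ℝ E] (S : Set E) (x : E) : Prop :=
  ∃ (n : ℕ) (c : Fin n → ℝ) (v : Fin n → E),
    (∀ i, 0 ≤ c i) ∧ (∀ i, v i ∈ S) ∧ x = ∑ i, c i • v i

section aux
variable {E : Type*} [AddCommGroup E] [Module ℝ E]

lemma inCone_zero (S : Set E) : inCone S 0 :=
  ⟨0, fun i => 0, fun i => i.elim0, fun i => le_refl _, fun i => i.elim0, by simp⟩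

lemma inCone_mem {S : Set E} {s : E} (hs : s ∈ S) : inCone S s :=
  ⟨1, fun _ => 1, fun _ => s, fun _ => zero_le_one, fun _ => hs, by simp⟩

lemma inCone_add {S : Set E} {x y : E} (hx : inCone S x) (hy : inCone S y) :
    inCone S (x + y) := by
  obtain ⟨n, c, v, hc, hv, rfl⟩ := hx
  obtain ⟨m, d, t, hd, ht, rfl⟩ := hy
  refine ⟨n + m, Fin.append c d, Fin.append v t, ?_, ?_, ?_⟩
  · intro i
    refine Fin.addCases (fun j => ?_) (fun j => ?_) i
    · simpa using hc j
    · simpa using hd j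
  · intro i
    refine Fin.addCases (fun j => ?_) (fun j => ?_) i
    · simpa using hv j
    · simpa using ht j
  · rw [Fin.sum_univ_add]
    simp

lemma inCone_smul {S : Set E} {x : E} {a : ℝ} (ha : 0 ≤ a) (hx : inCone S x) :
    inCone S (a • x) := by
  obtain ⟨n, c, v, hc, hv, rfl⟩ := hx
  exact ⟨n, fun i => a * c i, v, fun i => mul_nonneg ha (hc i), hv, by
    rw [Finset.smul_sum]; simp [mul_smul]⟩

lemma inCone_sum {S : Set E} {k : ℕ} {f : Fin k → E} (hf : ∀ i, inCone S (f i)) :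
    inCone S (∑ i, f i) :=
  Finset.sum_induction f _ (fun _ _ ha hb => inCone_add ha hb) (inCone_zero S)
    (fun i _ => hf i)

lemma inCone_mono {S T : Set E} (hST : S ⊆ T) {x : E} (hx : inCone S x) : inCone T x := by
  obtain ⟨n, c, v, hc, hv, rfl⟩ := hx
  exact ⟨n, c, v, hc, fun i => hST (hv i), rfl⟩

lemma inCone_union {A B : Set E} {x : E} (hx : inCone (A ∪ B) x) :
    ∃ y z, inCone A y ∧ inCone B z ∧ x = y + z := by
  obtain ⟨n, c, v, hc, hv, rfl⟩ := hx
  induction n with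
  | zero => exact ⟨0, 0, inCone_zero A, inCone_zero B, by simp⟩
  | succ n ih =>
    obtain ⟨y, z, hy, hz, hyz⟩ := ih (fun i => c i.succ) (fun i => v i.succ)
      (fun i => hc i.succ) (fun i => hv i.succ)
    rcases hv 0 with h0 | h0
    · refine ⟨c 0 • v 0 + y, z, inCone_add (inCone_smul (hc 0) (inCone_mem h0)) hy, hz, ?_⟩
      rw [Fin.sum_univ_succ, hyz, add_assoc]
    · refine ⟨y, c 0 • v 0 + z, hy, inCone_add (inCone_smul (hc 0) (inCone_mem h0)) hz, ?_⟩
      rw [Fin.sum_univ_succ, hyz]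
      abel

lemma inCone_range {k : ℕ} {u : Fin k → E} {x : E} (hx : inCone (Set.range u) x) :
    ∃ a : Fin k → ℝ, (∀ j, 0 ≤ a j) ∧ x = ∑ j, a j • u j := by
  obtain ⟨n, c, v, hc, hv, rfl⟩ := hx
  induction n with
  | zero => exact ⟨0, fun j => le_refl _, by simp⟩
  | succ n ih =>
    obtain ⟨a, ha, hax⟩ := ih (fun i => c i.succ) (fun i => v i.succ)
      (fun i => hc i.succ) (fun i => hv i.succ)
    obtain ⟨j0, hj0⟩ := hv 0
    refine ⟨fun j => (if j = j0 then c 0 else 0) + a j,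
      fun j => add_nonneg (by by_cases h : j = j0 <;> simp [h, hc 0]) (ha j), ?_⟩
    rw [Fin.sum_univ_succ, hax]
    simp only [add_smul, Finset.sum_add_distrib, ite_smul, zero_smul,
      Finset.sum_ite_eq', Finset.mem_univ, if_true, hj0]

lemma φ_vanish {S : Set E} {φ : E →ₗ[ℝ] ℝ} (h : ∀ s ∈ S, φ s = 0) {x : E}
    (hx : inCone S x) : φ x = 0 := by
  obtain ⟨n, c, v, hc, hv, rfl⟩ := hx
  rw [map_sum]
  exact Finset.sum_eq_zero fun i _ => by rw [map_smul, h _ (hv i), smul_zero]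

end aux

theorem stmt_14 {E : Type*} [AddCommGroup E] [Module ℝ E]
    (S : Set E) (k : ℕ) (u w : Fin k → E) (φ : Fin k → (E →ₗ[ℝ] ℝ))
    (h1 : ∀ s ∈ S, ∀ i, φ i s = 0)
    (h2 : ∀ i j, φ i (u j) = if i = j then -1 else 0)
    (h3 : ∀ i j, φ i (w j) = if i = j then 1 else 0)
    (h4 : ∀ i, inCone S (u i + w i)) :
    {x : E | inCone (S ∪ Set.range u ∪ Set.range w) x} ∩ {x : E | ∀ i, φ i x = 0} =
      {x : E | inCone S x} := by
  ext x
  simp only [Set.mem_inter_iff, Set.mem_setOf_eq]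
  constructor
  · rintro ⟨hx, hφ⟩
    obtain ⟨p, z, hp, hz, rfl⟩ := inCone_union hx
    obtain ⟨s, y, hs, hy, rfl⟩ := inCone_union hp
    obtain ⟨a, ha, rfl⟩ := inCone_range hy
    obtain ⟨b, hb, rfl⟩ := inCone_range hz
    have key : ∀ i, b i = a i := by
      intro i
      have := hφ i
      simp only [map_add, map_sum, map_smul, h2, h3, smul_eq_mul, mul_ite, mul_neg,
        mul_one, mul_zero, Finset.sum_ite_eq, Finset.sum_ite_eq', Finset.mem_univ, if_true,
        φ_vanish (fun s hs => h1 s hs i) hs] at this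
      linarith
    have : (∑ j, a j • u j) + ∑ j, b j • w j = ∑ j, a j • (u j + w j) := by
      simp only [key, smul_add, Finset.sum_add_distrib]
    rw [add_assoc, this]
    exact inCone_add hs (inCone_sum fun j => inCone_smul (ha j) (h4 j))
  · intro hx
    refine ⟨inCone_mono (fun y hy => Or.inl (Or.inl hy)) hx, fun i =>
      φ_vanish (fun s hs => h1 s hs i) hx⟩
end

section
/- Let n ≥ 5 and let Z : ZMod n → ℝ² be a family of points such that for every index i there exists an affine map f_i : ℝ² → ℝ with f_i (Z i) = 0, f_i (Z (i+1)) = 0, and f_i (Z j) > 0 for every j with j ≠ i and j ≠ i+1 (so the points Z i are, in cyclic order, the vertices of a strictly convex n-gon). Let P := convexHull ℝ (Set.range Z), and for each i let M_i denote the affine span of {Z i, Z (i+1)}. Then there is no line L = {p + t • v | t ∈ ℝ} in ℝ² (p, v ∈ ℝ², v ≠ 0) such that L meets the interior of P and, for every i, the intersection L ∩ M_i is nonempty and contained in P. -/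
/-!
Each edge functional `f i` is nonnegative on the polygon `P` and, as soon as there is a third
vertex, positive on its interior. A line through an interior point `q` meets the edge line `M i`
in a point `x i` of `P` with `f i (x i) = 0`, so `x i` is not interior. Open segments from `P`
to `q` lie in the interior, hence no `x j` lies strictly between some `x i` and `q`: on each side
of `q` all the `x i` coincide. With `n ≥ 5` edges, three of them meet the line in one point of `P`.
But two edge functionals can only vanish at a common point of `P` if their edges are adjacent
(otherwise `f i + f j` is positive at every vertex), and no three indices of `ℤ/nℤ` with `n ≥ 4`
are pairwise adjacent.
-/

open Set Filter Topology

theorem ZMod.natCast_ne_zero_of_lt {n k : ℕ} (hk : 0 < k) (hkn : k < n) : (k : ZMod n) ≠ 0 := by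
  rw [Ne, ZMod.natCast_eq_zero_iff]
  exact Nat.not_dvd_of_pos_of_lt hk hkn

theorem ZMod.not_adjacent_triangle {n : ℕ} (hn : 4 ≤ n) {a b c : ZMod n}
    (hab : a ≠ b) (hac : a ≠ c) (hbc : b ≠ c) :
    ¬ ((b = a + 1 ∨ a = b + 1) ∧ (c = a + 1 ∨ a = c + 1) ∧ (c = b + 1 ∨ b = c + 1)) := by
  have h1 : ((1 : ℕ) : ZMod n) ≠ 0 := natCast_ne_zero_of_lt (by norm_num) (by omega)
  have h3 : ((3 : ℕ) : ZMod n) ≠ 0 := natCast_ne_zero_of_lt (by norm_num) (by omega)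
  push_cast at h1 h3
  grind

section OrderedField

variable {𝕜 E : Type*} [Field 𝕜] [LinearOrder 𝕜] [IsStrictOrderedRing 𝕜]
  [AddCommGroup E] [Module 𝕜 E]

theorem AffineMap.exists_le_of_mem_convexHull (f : E →ᵃ[𝕜] 𝕜) {s : Set E} {x : E}
    (hx : x ∈ convexHull 𝕜 s) : ∃ y ∈ s, f y ≤ f x :=
  ((concaveOn_id convex_univ).comp_affineMap f).exists_le_of_mem_convexHull (subset_univ _) hx

theorem add_smul_mem_openSegment (p v : E) {a b c : 𝕜} (h : b ∈ openSegment 𝕜 a c) :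
    p + b • v ∈ openSegment 𝕜 (p + a • v) (p + c • v) := by
  have hline : ∀ t : 𝕜, AffineMap.lineMap p (p + v) t = p + t • v := fun t => by
    simp [AffineMap.lineMap_apply, add_comm]
  rw [← hline, ← hline, ← hline, ← image_openSegment]
  exact mem_image_of_mem _ h

end OrderedField

theorem AffineMap.eq_of_mem_affineSpan {k V₁ P₁ V₂ P₂ : Type*} [Ring k] [AddCommGroup V₁]
    [Module k V₁] [AddTorsor V₁ P₁] [AddCommGroup V₂] [Module k V₂] [AddTorsor V₂ P₂]
    (f : P₁ →ᵃ[k] P₂) {s : Set P₁} {c : P₂} (hs : ∀ z ∈ s, f z = c) {x : P₁}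
    (hx : x ∈ affineSpan k s) : f x = c := by
  have hmap : f x ∈ affineSpan k (f '' s) :=
    AffineSubspace.map_span f s ▸ AffineSubspace.mem_map_of_mem f hx
  have hsub : affineSpan k (f '' s) ≤ affineSpan k {c} :=
    affineSpan_mono k (image_subset_iff.2 hs)
  exact (AffineSubspace.mem_affineSpan_singleton k V₂).1 (hsub hmap)

theorem AffineMap.pos_of_mem_interior {E : Type*} [AddCommGroup E] [Module ℝ E]
    [TopologicalSpace E] [IsTopologicalAddGroup E] [ContinuousSMul ℝ E]
    (f : E →ᵃ[ℝ] ℝ) {s : Set E} (hs : ∀ z ∈ s, 0 ≤ f z) {x y : E}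
    (hx : x ∈ interior s) (hy : 0 < f y) : 0 < f x := by
  by_contra! hfx
  -- just beyond `x` on the ray from `y` through `x`, `f` is negative but we are still in `s`
  have hnear : ∀ᶠ t in 𝓝[>] (1 : ℝ), lineMap y x t ∈ s :=
    nhdsWithin_le_nhds <| (lineMap_continuous.tendsto' 1 x (lineMap_apply_one y x)).eventually
      (mem_interior_iff_mem_nhds.1 hx)
  obtain ⟨t, hts, ht⟩ := (hnear.and self_mem_nhdsWithin).exists
  have := hs _ hts
  rw [apply_lineMap, lineMap_apply_ring'] at this
  nlinarith [show (1 : ℝ) < t from ht]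

def IsEdgeSupport {E : Type*} [AddCommGroup E] [Module ℝ E] {n : ℕ} (Z : ZMod n → E)
    (f : ZMod n → E →ᵃ[ℝ] ℝ) : Prop :=
  ∀ i, f i (Z i) = 0 ∧ f i (Z (i + 1)) = 0 ∧ ∀ j, j ≠ i → j ≠ i + 1 → 0 < f i (Z j)

namespace IsEdgeSupport

variable {E : Type*} [AddCommGroup E] [Module ℝ E] {n : ℕ} {Z : ZMod n → E}
  {f : ZMod n → E →ᵃ[ℝ] ℝ} {x : E}

theorem nonneg (hZ : IsEdgeSupport Z f) (i j : ZMod n) : 0 ≤ f i (Z j) := by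
  obtain ⟨h0, h1, hpos⟩ := hZ i
  by_cases hji : j = i
  · simp [hji, h0]
  by_cases hji1 : j = i + 1
  · simp [hji1, h1]
  exact (hpos j hji hji1).le

theorem nonneg_of_mem_convexHull (hZ : IsEdgeSupport Z f) (i : ZMod n)
    (hx : x ∈ convexHull ℝ (range Z)) : 0 ≤ f i x := by
  obtain ⟨_, ⟨j, rfl⟩, hj⟩ := (f i).exists_le_of_mem_convexHull hx
  exact (hZ.nonneg i j).trans hj

theorem eq_zero_of_mem_affineSpan (hZ : IsEdgeSupport Z f) {i : ZMod n}
    (hx : x ∈ affineSpan ℝ {Z i, Z (i + 1)}) : f i x = 0 :=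
  (f i).eq_of_mem_affineSpan (by rintro _ (rfl | rfl); exacts [(hZ i).1, (hZ i).2.1]) hx

theorem adjacent_of_eq_zero (hZ : IsEdgeSupport Z f) (hx : x ∈ convexHull ℝ (range Z))
    {i j : ZMod n} (hij : i ≠ j) (hi : f i x = 0) (hj : f j x = 0) :
    j = i + 1 ∨ i = j + 1 := by
  by_contra! hnadj
  obtain ⟨_, ⟨k, rfl⟩, hk⟩ := (f i + f j).exists_le_of_mem_convexHull hx
  have hpos : 0 < f i (Z k) + f j (Z k) := by
    by_cases hki : k = i ∨ k = i + 1
    · have := (hZ j).2.2 k (by grind) (by grind)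
      linarith [hZ.nonneg i k]
    · push Not at hki
      linarith [(hZ i).2.2 k hki.1 hki.2, hZ.nonneg j k]
  simp only [AffineMap.coe_add, Pi.add_apply, hi, hj] at hk
  linarith

variable [TopologicalSpace E] [IsTopologicalAddGroup E] [ContinuousSMul ℝ E]

theorem pos_of_mem_interior (hZ : IsEdgeSupport Z f) (hn : 3 ≤ n) (i : ZMod n)
    (hx : x ∈ interior (convexHull ℝ (range Z))) : 0 < f i x := by
  have h1 : ((1 : ℕ) : ZMod n) ≠ 0 := ZMod.natCast_ne_zero_of_lt (by norm_num) (by omega)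
  have h2 : ((2 : ℕ) : ZMod n) ≠ 0 := ZMod.natCast_ne_zero_of_lt (by norm_num) (by omega)
  push_cast at h1 h2
  exact (f i).pos_of_mem_interior (fun _ => hZ.nonneg_of_mem_convexHull i) hx
    ((hZ i).2.2 (i + 2) (fun h => h2 (by linear_combination h))
      (fun h => h1 (by linear_combination h)))

theorem eq_of_same_side (hZ : IsEdgeSupport Z f) (hn : 3 ≤ n) {p v : E} {s ti tj : ℝ}
    {i j : ZMod n} (hq : p + s • v ∈ interior (convexHull ℝ (range Z)))
    (hxi : p + ti • v ∈ convexHull ℝ (range Z)) (hxj : p + tj • v ∈ convexHull ℝ (range Z))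
    (hfi : f i (p + ti • v) = 0) (hfj : f j (p + tj • v) = 0) (hside : ti < s ↔ tj < s) :
    ti = tj := by
  have not_between : ∀ {k t u}, p + t • v ∈ convexHull ℝ (range Z) → f k (p + u • v) = 0 →
      u ∉ openSegment ℝ t s := fun ht hu hmem =>
    (hZ.pos_of_mem_interior hn _ ((convex_convexHull ℝ _).openSegment_self_interior_subset_interior
      ht hq (add_smul_mem_openSegment p v hmem))).ne' hu
  have ne_s : ∀ {k u}, f k (p + u • v) = 0 → u ≠ s := by
    rintro k u hu rfl
    exact (hZ.pos_of_mem_interior hn k hq).ne' hu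
  wlog hlt : ti < tj generalizing i j ti tj
  · rcases (not_lt.1 hlt).lt_or_eq with h | h
    · exact (this hxj hxi hfj hfi hside.symm h).symm
    · exact h.symm
  rcases (ne_s hfj).lt_or_gt with h | h
  · exact absurd (openSegment_eq_Ioo (hlt.trans h) ▸ ⟨hlt, h⟩) (not_between hxi hfj)
  · have hsi : s < ti := lt_of_le_of_ne (not_lt.1 (mt hside.1 h.not_gt)) (ne_s hfi).symm
    exact absurd (openSegment_symm ℝ s tj ▸ openSegment_eq_Ioo (hsi.trans hlt) ▸ ⟨hsi, hlt⟩)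
      (not_between hxj hfi)

end IsEdgeSupport

theorem stmt_16 (n : ℕ) (hn : 5 ≤ n) (Z : ZMod n → (Fin 2 → ℝ))
    (hconv : ∀ i : ZMod n, ∃ f : (Fin 2 → ℝ) →ᵃ[ℝ] ℝ,
      f (Z i) = 0 ∧ f (Z (i + 1)) = 0 ∧
      ∀ j : ZMod n, j ≠ i → j ≠ i + 1 → 0 < f (Z j)) :
    ¬ ∃ (p v : Fin 2 → ℝ), v ≠ 0 ∧
      ({x : Fin 2 → ℝ | ∃ t : ℝ, x = p + t • v} ∩
          interior (convexHull ℝ (Set.range Z))).Nonempty ∧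
      ∀ i : ZMod n,
        ({x : Fin 2 → ℝ | ∃ t : ℝ, x = p + t • v} ∩
            (affineSpan ℝ ({Z i, Z (i + 1)} : Set (Fin 2 → ℝ)) : Set (Fin 2 → ℝ))).Nonempty ∧
        {x : Fin 2 → ℝ | ∃ t : ℝ, x = p + t • v} ∩
            (affineSpan ℝ ({Z i, Z (i + 1)} : Set (Fin 2 → ℝ)) : Set (Fin 2 → ℝ)) ⊆
          convexHull ℝ (Set.range Z) := by
  rintro ⟨p, v, -, ⟨_, ⟨s, rfl⟩, hq⟩, hM⟩
  obtain ⟨f, hZ⟩ : ∃ f, IsEdgeSupport Z f := Classical.skolem.1 hconv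
  choose x hxL hxM using fun i => (hM i).1
  choose t ht using hxL
  have hxP : ∀ i, p + t i • v ∈ convexHull ℝ (range Z) :=
    fun i => ht i ▸ (hM i).2 ⟨⟨t i, ht i⟩, hxM i⟩
  have hfx : ∀ i, f i (p + t i • v) = 0 := fun i => ht i ▸ hZ.eq_zero_of_mem_affineSpan (hxM i)
  have : NeZero n := ⟨by omega⟩
  obtain ⟨side, hside⟩ := Fintype.exists_lt_card_fiber_of_mul_lt_card (f := fun i => t i < s)
    (n := 2) (by simp only [Fintype.card_prop, ZMod.card]; omega)
  obtain ⟨a, ha, b, hb, c, hc, hab, hac, hbc⟩ := Finset.two_lt_card.1 hside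
  simp only [Finset.mem_filter, Finset.mem_univ, true_and] at ha hb hc
  have adj : ∀ i j, (t i < s) = side → (t j < s) = side → i ≠ j → j = i + 1 ∨ i = j + 1 :=
    fun i j hi hj hij => hZ.adjacent_of_eq_zero (hxP i) hij (hfx i)
      (hZ.eq_of_same_side (by omega) hq (hxP i) (hxP j) (hfx i) (hfx j) (by rw [hi, hj]) ▸ hfx j)
  exact ZMod.not_adjacent_triangle (by omega) hab hac hbc
    ⟨adj a b ha hb hab, adj a c ha hc hac, adj b c hb hc hbc⟩
end
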